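/- arXiv:2512.24236 — 3 statements merged into one kernel-verified Lean document; each statement's English description precedes it below -/
import Mathlib

section
/- Let v ∈ ℂ² be a column vector and w ∈ (ℂ²)* a row vector with w(v) = 0, and define the matrix-valued map 𝔄(λ) := −λ⁻¹(v·w)₀ + (v·vᴴ − wᴴ·w)₀ + λ·((v·w)₀)ᴴ for λ ∈ ℂ∖{0}. Then for every λ ∈ ℂ∖{0}: (a) tr 𝔄(λ) = 0; (b) det 𝔄(λ) = −((|v|² − |w|²)/2)²; (c) the reality condition (𝔄(−1/λ̄))ᴴ = 𝔄(λ) holds (equivalently 𝔄* = −𝔄); (d) the λ⁻¹-coefficient annihilates v, i.e. (v·w)₀ · v = 0. -/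
open Complex ComplexConjugate Matrix

noncomputable section

/-- The traceless part `M₀ = M − ½(tr M)·I` of a 2×2 complex matrix. -/
def tl (M : Matrix (Fin 2) (Fin 2) ℂ) : Matrix (Fin 2) (Fin 2) ℂ :=
  M - (M.trace / 2) • (1 : Matrix (Fin 2) (Fin 2) ℂ)

/-- The outer product `v·w` of a column vector and a row vector. -/
def outer (v w : Fin 2 → ℂ) : Matrix (Fin 2) (Fin 2) ℂ :=
  Matrix.of fun i j => v i * w j

/-- The outer product `v·vᴴ`. -/
def vvH (v : Fin 2 → ℂ) : Matrix (Fin 2) (Fin 2) ℂ :=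
  Matrix.of fun i j => v i * conj (v j)

/-- The outer product `wᴴ·w`. -/
def wHw (w : Fin 2 → ℂ) : Matrix (Fin 2) (Fin 2) ℂ :=
  Matrix.of fun i j => conj (w i) * w j

/-- The loop `𝔄(λ) = −λ⁻¹(v·w)₀ + (v·vᴴ − wᴴ·w)₀ + λ·((v·w)₀)ᴴ`. -/
def frakA (v w : Fin 2 → ℂ) (l : ℂ) : Matrix (Fin 2) (Fin 2) ℂ :=
  -(l⁻¹ • tl (outer v w)) + tl (vvH v - wHw w) + l • (tl (outer v w))ᴴ

/-!
With `w(v) = 0`, the coefficient `N = (v·w)₀ = v·w` is a rank-one matrix with `N v = 0`, and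
`H = (v·vᴴ − wᴴ·w)₀` is Hermitian with `w H v = 0`. For 2×2 matrices
`det (X + Y) = det X + det Y + tr X · tr Y − tr (X Y)`; expanding `𝔄(λ) = −λ⁻¹N + H + λNᴴ` with
it, every cross term dies except `−tr ((−λ⁻¹N)(λNᴴ)) = |v|²|w|²`, so
`det 𝔄(λ) = det H + |v|²|w|² = −((|v|² + |w|²)/2)² + |v|²|w|² = −((|v|² − |w|²)/2)²`.
The reality condition is `conj (−1/λ̄) = −λ⁻¹` together with `Hᴴ = H`.
-/

theorem Matrix.det_add_fin_two {R : Type*} [CommRing R] (X Y : Matrix (Fin 2) (Fin 2) R) :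
    (X + Y).det = X.det + Y.det + X.trace * Y.trace - (X * Y).trace := by
  simp only [det_fin_two, trace_fin_two, add_apply, mul_apply, Fin.sum_univ_two]
  ring

section Traceless

variable (M : Matrix (Fin 2) (Fin 2) ℂ)

theorem trace_tl : (tl M).trace = 0 := by
  simp [tl, trace_sub, trace_smul, trace_one]

theorem tl_of_trace_eq_zero (h : M.trace = 0) : tl M = M := by
  simp [tl, h]

theorem tl_conjTranspose : tl Mᴴ = (tl M)ᴴ := by
  simp [tl, conjTranspose_sub, conjTranspose_smul, trace_conjTranspose]

theorem det_tl : (tl M).det = M.det - M.trace ^ 2 / 4 := by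
  simp [tl, det_fin_two, trace_fin_two]
  ring

end Traceless

section Outer

variable (v w : Fin 2 → ℂ)

theorem trace_outer : (outer v w).trace = w ⬝ᵥ v := by
  simp [outer, trace, dotProduct, mul_comm]

theorem outer_mulVec (u : Fin 2 → ℂ) : outer v w *ᵥ u = (w ⬝ᵥ u) • v := by
  ext i
  simp [outer, mulVec, dotProduct, Fin.sum_univ_two]
  ring

theorem det_outer : (outer v w).det = 0 := by
  simp [outer, det_fin_two]
  ring

theorem trace_outer_mul (M : Matrix (Fin 2) (Fin 2) ℂ) :
    (outer v w * M).trace = w ⬝ᵥ (M *ᵥ v) := by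
  simp [outer, trace, mul_apply, mulVec, dotProduct]
  ring

theorem outer_conjTranspose : (outer v w)ᴴ = outer (star w) (star v) := by
  ext i j
  simp [outer, mul_comm]

theorem vvH_eq_outer : vvH v = outer v (star v) := rfl

theorem wHw_eq_outer : wHw w = outer (star w) w := rfl

theorem star_dotProduct_self : star v ⬝ᵥ v = ((∑ i, normSq (v i) : ℝ) : ℂ) := by
  simp [dotProduct, normSq_eq_conj_mul_self]

theorem trace_outer_mul_conjTranspose :
    (outer v w * (outer v w)ᴴ).trace = star v ⬝ᵥ v * (star w ⬝ᵥ w) := by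
  rw [outer_conjTranspose, trace_outer_mul, outer_mulVec, dotProduct_smul, smul_eq_mul,
    dotProduct_comm w]

end Outer

theorem trace_vvH_sub_wHw (v w : Fin 2 → ℂ) :
    (vvH v - wHw w).trace = star v ⬝ᵥ v - star w ⬝ᵥ w := by
  rw [trace_sub, vvH_eq_outer, wHw_eq_outer, trace_outer, trace_outer, dotProduct_comm w]

theorem isHermitian_vvH_sub_wHw (v w : Fin 2 → ℂ) : (vvH v - wHw w).IsHermitian := by
  rw [IsHermitian, conjTranspose_sub, vvH_eq_outer, wHw_eq_outer, outer_conjTranspose,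
    outer_conjTranspose, star_star, star_star]

theorem conjTranspose_tl_vvH_sub_wHw (v w : Fin 2 → ℂ) :
    (tl (vvH v - wHw w))ᴴ = tl (vvH v - wHw w) := by
  rw [← tl_conjTranspose, isHermitian_vvH_sub_wHw]

theorem frakA_conjTranspose (v w : Fin 2 → ℂ) (l : ℂ) :
    (frakA v w (-(1 / conj l)))ᴴ = frakA v w l := by
  simp only [frakA, conjTranspose_add, conjTranspose_neg, conjTranspose_smul,
    conjTranspose_conjTranspose, conjTranspose_tl_vvH_sub_wHw, star_def, map_neg, map_inv₀,
    conj_conj, one_div, inv_neg, inv_inv]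
  module

theorem trace_frakA (v w : Fin 2 → ℂ) (l : ℂ) : (frakA v w l).trace = 0 := by
  simp [frakA, trace_tl, trace_conjTranspose]

section Orthogonal

variable {v w : Fin 2 → ℂ} (hvw : w ⬝ᵥ v = 0)
include hvw

theorem tl_outer_of_dotProduct_eq_zero : tl (outer v w) = outer v w :=
  tl_of_trace_eq_zero _ (by rw [trace_outer, hvw])

theorem det_vvH_sub_wHw : (vvH v - wHw w).det = -(star v ⬝ᵥ v * (star w ⬝ᵥ w)) := by
  rw [sub_eq_add_neg, det_add_fin_two, vvH_eq_outer, wHw_eq_outer, det_neg, det_outer, det_outer,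
    trace_neg, trace_outer, trace_outer, Matrix.mul_neg, trace_neg, trace_outer_mul, outer_mulVec,
    hvw, zero_smul, dotProduct_zero, dotProduct_comm w]
  ring

theorem det_tl_vvH_sub_wHw :
    (tl (vvH v - wHw w)).det = -((star v ⬝ᵥ v + star w ⬝ᵥ w) / 2) ^ 2 := by
  rw [det_tl, det_vvH_sub_wHw hvw, trace_vvH_sub_wHw]
  ring

theorem trace_outer_mul_tl_vvH_sub_wHw : (outer v w * tl (vvH v - wHw w)).trace = 0 := by
  rw [trace_outer_mul, tl, sub_mulVec, smul_mulVec, one_mulVec, sub_mulVec, vvH_eq_outer,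
    wHw_eq_outer, outer_mulVec, outer_mulVec, hvw]
  simp [dotProduct_sub, dotProduct_smul, hvw]

theorem det_frakA {l : ℂ} (hl : l ≠ 0) :
    (frakA v w l).det = -((star v ⬝ᵥ v - star w ⬝ᵥ w) / 2) ^ 2 := by
  have hNH := trace_outer_mul_tl_vvH_sub_wHw hvw
  have hHN : (tl (vvH v - wHw w) * (outer v w)ᴴ).trace = 0 := by
    rw [← conjTranspose_tl_vvH_sub_wHw, ← conjTranspose_mul, trace_conjTranspose, hNH, star_zero]
  have hN : (outer v w).trace = 0 := by rw [trace_outer, hvw]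
  rw [frakA, tl_outer_of_dotProduct_eq_zero hvw, det_add_fin_two, det_add_fin_two]
  simp only [det_neg, det_smul, det_conjTranspose, det_outer, trace_neg, trace_smul,
    trace_conjTranspose, trace_tl, hN, Matrix.add_mul, Matrix.neg_mul, Matrix.smul_mul,
    Matrix.mul_smul, trace_add, hNH, hHN, trace_outer_mul_conjTranspose,
    det_tl_vvH_sub_wHw hvw, smul_eq_mul, star_zero]
  linear_combination (star v ⬝ᵥ v * star w ⬝ᵥ w) * mul_inv_cancel₀ hl

end Orthogonal

/-- If `w(v) = 0` then for every `λ ≠ 0`: `𝔄(λ)` is traceless, has determinant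
`−((|v|² − |w|²)/2)²`, satisfies the reality condition `(𝔄(−1/λ̄))ᴴ = 𝔄(λ)`, and its
`λ⁻¹`-coefficient annihilates `v`. -/
theorem stmt4 (v w : Fin 2 → ℂ) (hvw : (∑ i, w i * v i) = 0) :
    ∀ l : ℂ, l ≠ 0 →
      (frakA v w l).trace = 0 ∧
      (frakA v w l).det
        = -((((∑ i, Complex.normSq (v i)) - ∑ i, Complex.normSq (w i)) / 2 : ℝ) : ℂ) ^ 2 ∧
      (frakA v w (-(1 / conj l)))ᴴ = frakA v w l ∧
      (tl (outer v w)).mulVec v = 0 := by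
  intro l hl
  change w ⬝ᵥ v = 0 at hvw
  refine ⟨trace_frakA v w l, ?_, frakA_conjTranspose v w l, ?_⟩
  · rw [det_frakA hvw hl, star_dotProduct_self, star_dotProduct_self]
    push_cast
    ring
  · rw [tl_outer_of_dotProduct_eq_zero hvw, outer_mulVec, hvw, zero_smul]
end
end

section
/- Let α > 0, β ∈ ℂ, μ := i√(α² + |β|²), and define 𝔛(λ) := λ⁻¹·β·E₁₂ + diag(μ, −μ) + λ·conj(β)·E₂₁ for λ ∈ ℂ∖{0}. Then: (a) det 𝔛(λ) = α² for all λ ∈ ℂ∖{0}; (b) the reality condition (𝔛(−1/λ̄))ᴴ = −𝔛(λ) holds for all λ ∈ ℂ∖{0}; (c) the monodromy matrix exp(2π·𝔛(λ)) is loop-unitary: (exp(2π·𝔛(−1/λ̄)))ᴴ · exp(2π·𝔛(λ)) = I for all λ ∈ ℂ∖{0}. -/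
/-! Writing `μ = i s` with `s = √(α² + |β|²)`, the matrix `𝔛(λ)` has diagonal `(i s, -i s)` and
off-diagonal entries `λ⁻¹ β`, `λ β̄`, so `det 𝔛(λ) = s² - |β|² = α²`. Under `λ ↦ -1/λ̄`
the off-diagonal entries are exchanged up to conjugation and sign, which is the reality
condition `𝔛(-1/λ̄)ᴴ = -𝔛(λ)`. Since `exp` commutes with `ᴴ`, the monodromy then satisfies
`exp(2π𝔛(-1/λ̄))ᴴ = exp(-2π𝔛(λ))`, the inverse of `exp(2π𝔛(λ))`. -/

open Complex ComplexConjugate Matrix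

noncomputable section

/-- The loop `𝔛(λ) = λ⁻¹·β·E₁₂ + diag(μ, −μ) + λ·conj(β)·E₂₁` with
`μ = i√(α² + |β|²)`. -/
def frakX (α : ℝ) (β : ℂ) (l : ℂ) : Matrix (Fin 2) (Fin 2) ℂ :=
  l⁻¹ • (β • !![0, 1; 0, 0])
    + !![Complex.I * ((Real.sqrt (α ^ 2 + Complex.normSq β) : ℝ) : ℂ), 0;
         0, -(Complex.I * ((Real.sqrt (α ^ 2 + Complex.normSq β) : ℝ) : ℂ))]
    + l • ((conj β) • !![0, 0; 1, 0])

namespace Matrix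

variable {m 𝔸 : Type*} [Fintype m] [DecidableEq m] [NormedRing 𝔸] [NormedAlgebra ℚ 𝔸]
  [CompleteSpace 𝔸] [StarRing 𝔸] [ContinuousStar 𝔸]

theorem conjTranspose_exp_mul_exp_of_conjTranspose_eq_neg {A B : Matrix m m 𝔸}
    (h : Bᴴ = -A) : (NormedSpace.exp B)ᴴ * NormedSpace.exp A = 1 := by
  rw [← exp_conjTranspose, h, ← exp_add_of_commute _ _ (Commute.refl A).neg_left,
    neg_add_cancel, NormedSpace.exp_zero]

end Matrix

theorem frakX_eq (α : ℝ) (β l : ℂ) :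
    frakX α β l = !![I * (√(α ^ 2 + normSq β) : ℂ), l⁻¹ * β;
      l * conj β, -(I * (√(α ^ 2 + normSq β) : ℂ))] := by
  ext i j
  fin_cases i <;> fin_cases j <;> simp [frakX]

theorem det_frakX (α : ℝ) (β : ℂ) {l : ℂ} (hl : l ≠ 0) : (frakX α β l).det = (α : ℂ) ^ 2 := by
  have hs : (√(α ^ 2 + normSq β) : ℂ) ^ 2 = (α : ℂ) ^ 2 + normSq β := by
    rw [← ofReal_pow, Real.sq_sqrt (add_nonneg (sq_nonneg α) (normSq_nonneg β))]
    push_cast; ring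
  rw [frakX_eq, det_fin_two_of]
  linear_combination hs - (√(α ^ 2 + normSq β) : ℂ) ^ 2 * I_sq
    - β * conj β * inv_mul_cancel₀ hl - mul_conj β

theorem conjTranspose_frakX_neg_inv_conj (α : ℝ) (β l : ℂ) :
    (frakX α β (-(1 / conj l)))ᴴ = -frakX α β l := by
  rw [frakX_eq, frakX_eq]
  ext i j
  fin_cases i <;> fin_cases j <;> simp [conjTranspose_apply, conj_I]

theorem stmt10_general (α : ℝ) (β : ℂ) :
    ∀ l : ℂ, l ≠ 0 →
      (frakX α β l).det = (α : ℂ) ^ 2 ∧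
      (frakX α β (-(1 / conj l)))ᴴ = -frakX α β l ∧
      (NormedSpace.exp (((2 * Real.pi : ℝ) : ℂ) • frakX α β (-(1 / conj l))))ᴴ
          * NormedSpace.exp (((2 * Real.pi : ℝ) : ℂ) • frakX α β l) = 1 := by
  intro l hl
  have reality := conjTranspose_frakX_neg_inv_conj α β l
  refine ⟨det_frakX α β hl, reality, ?_⟩
  apply conjTranspose_exp_mul_exp_of_conjTranspose_eq_neg
  rw [conjTranspose_smul, reality, star_def, conj_ofReal, smul_neg]

/-- For `α > 0` and `β ∈ ℂ`: (a) `det 𝔛(λ) = α²`; (b) the reality condition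
`(𝔛(−1/λ̄))ᴴ = −𝔛(λ)`; (c) the monodromy `exp(2π𝔛)` is loop-unitary. -/
theorem stmt10 (α : ℝ) (hα : 0 < α) (β : ℂ) :
    ∀ l : ℂ, l ≠ 0 →
      (frakX α β l).det = (α : ℂ) ^ 2 ∧
      (frakX α β (-(1 / conj l)))ᴴ = -frakX α β l ∧
      (NormedSpace.exp (((2 * Real.pi : ℝ) : ℂ) • frakX α β (-(1 / conj l))))ᴴ
          * NormedSpace.exp (((2 * Real.pi : ℝ) : ℂ) • frakX α β l) = 1 :=
  stmt10_general α β
end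
end

section
/- Let α > 0, β ∈ ℂ, and let 𝔛, Λ, K_𝔛 be as in the ℓ¹-model of the loop algebra. Then for every Y ∈ K_𝔛 there exists Ŷ ∈ Λ with [𝔛, Ŷ] = Y, where the bracket is the convolution bracket ([𝔛,Ŷ])_k = Σ_j [𝔛_j, Ŷ_{k−j}]. Moreover Ŷ is unique up to adding f·𝔛 for a summable scalar sequence f ∈ ℓ¹(ℤ, ℂ) (acting by convolution, (f·𝔛)_k = Σ_j f_j 𝔛_{k−j}), and the assignment Y ↦ Ŷ can be chosen to be a continuous linear map. -/
/-!
Pointwise in `λ` one has `𝔛(λ)² = -det 𝔛(λ) = -α²`, and for traceless `2 × 2` matrices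
`XYX = tr(XY) X - Y X²`. Hence on traceless loops
`ad_𝔛² ξ = -4α² ξ - 2 tr(𝔛ξ)·𝔛`. On `K_𝔛` the last term vanishes, so
`Ŷ = -(4α²)⁻¹ [𝔛, Y]` solves `[𝔛, Ŷ] = Y`, linearly and boundedly in `ℓ¹`; and if `[𝔛, D] = 0`
the same identity gives `D = f·𝔛` with `f = -(2α²)⁻¹ tr(𝔛D)`.
-/

open Complex ComplexConjugate Matrix

noncomputable section

attribute [local instance] Matrix.normedAddCommGroup

/-- Membership in the ℓ¹-model `Λ` of the Wiener loop algebra `Λsl(2,ℂ)`: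
absolutely summable coefficients, all traceless. -/
def memL (ξ : ℤ → Matrix (Fin 2) (Fin 2) ℂ) : Prop :=
  Summable (fun k => ‖ξ k‖) ∧ ∀ k, (ξ k).trace = 0

/-- The loop `𝔛` with coefficients `𝔛₋₁ = β·E₁₂`, `𝔛₀ = diag(μ,−μ)` (`μ = i√(α²+|β|²)`),
`𝔛₁ = conj(β)·E₂₁`, and `𝔛_k = 0` otherwise. -/
def XX (α : ℝ) (β : ℂ) : ℤ → Matrix (Fin 2) (Fin 2) ℂ := fun k =>
  if k = -1 then β • !![0, 1; 0, 0]
  else if k = 0 then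
    !![Complex.I * ((Real.sqrt (α ^ 2 + Complex.normSq β) : ℝ) : ℂ), 0;
       0, -(Complex.I * ((Real.sqrt (α ^ 2 + Complex.normSq β) : ℝ) : ℂ))]
  else if k = 1 then (conj β) • !![0, 0; 1, 0]
  else 0

/-- The condition `tr(𝔛ξ) = 0`, coefficient by coefficient. -/
def Kcond (α : ℝ) (β : ℂ) (ξ : ℤ → Matrix (Fin 2) (Fin 2) ℂ) : Prop :=
  ∀ k : ℤ, (XX α β (-1) * ξ (k + 1)).trace + (XX α β 0 * ξ k).trace
      + (XX α β 1 * ξ (k - 1)).trace = 0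

/-- The convolution bracket `([𝔛, Ŷ])_k = Σ_j [𝔛_j, Ŷ_{k−j}]`, which reduces to three
terms since `𝔛` is supported on `{−1, 0, 1}`. -/
def brX (α : ℝ) (β : ℂ) (Y : ℤ → Matrix (Fin 2) (Fin 2) ℂ) :
    ℤ → Matrix (Fin 2) (Fin 2) ℂ := fun k =>
  (XX α β (-1) * Y (k + 1) - Y (k + 1) * XX α β (-1))
    + (XX α β 0 * Y k - Y k * XX α β 0)
    + (XX α β 1 * Y (k - 1) - Y (k - 1) * XX α β 1)

section Tridiag

variable {𝕜 E F : Type*} [NontriviallyNormedField 𝕜] [SeminormedAddCommGroup E]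
  [NormedSpace 𝕜 E] [SeminormedAddCommGroup F] [NormedSpace 𝕜 F]

-- Convolution with a loop whose coefficients in degrees `-1, 0, 1` are `A, B, C`.
def tridiag (A B C : E →L[𝕜] F) : (ℤ → E) →ₗ[𝕜] (ℤ → F) :=
  LinearMap.pi fun k => (A : E →ₗ[𝕜] F) ∘ₗ LinearMap.proj (k + 1)
    + (B : E →ₗ[𝕜] F) ∘ₗ LinearMap.proj k + (C : E →ₗ[𝕜] F) ∘ₗ LinearMap.proj (k - 1)

theorem tridiag_apply (A B C : E →L[𝕜] F) (Y : ℤ → E) (k : ℤ) :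
    tridiag A B C Y k = A (Y (k + 1)) + B (Y k) + C (Y (k - 1)) :=
  rfl

theorem summable_norm_comp_add {Y : ℤ → E} (hY : Summable fun k => ‖Y k‖) (n : ℤ) :
    Summable fun k => ‖Y (k + n)‖ :=
  (Equiv.addRight n).summable_iff.mpr hY

theorem summable_norm_comp_sub {Y : ℤ → E} (hY : Summable fun k => ‖Y k‖) (n : ℤ) :
    Summable fun k => ‖Y (k - n)‖ :=
  (Equiv.subRight n).summable_iff.mpr hY

theorem tsum_norm_comp_add (Y : ℤ → E) (n : ℤ) : ∑' k, ‖Y (k + n)‖ = ∑' k, ‖Y k‖ :=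
  (Equiv.addRight n).tsum_eq fun k => ‖Y k‖

theorem tsum_norm_comp_sub (Y : ℤ → E) (n : ℤ) : ∑' k, ‖Y (k - n)‖ = ∑' k, ‖Y k‖ :=
  (Equiv.subRight n).tsum_eq fun k => ‖Y k‖

theorem summable_norm_smul {ι : Type*} {Y : ι → E} (c : 𝕜) (hY : Summable fun k => ‖Y k‖) :
    Summable fun k => ‖(c • Y) k‖ := by
  simpa only [Pi.smul_apply, norm_smul] using hY.mul_left ‖c‖

variable (A B C : E →L[𝕜] F) {Y : ℤ → E}

theorem norm_tridiag_apply_le (Y : ℤ → E) (k : ℤ) :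
    ‖tridiag A B C Y k‖ ≤ ‖A‖ * ‖Y (k + 1)‖ + ‖B‖ * ‖Y k‖ + ‖C‖ * ‖Y (k - 1)‖ :=
  (norm_add₃_le ..).trans (add_le_add_three (A.le_opNorm _) (B.le_opNorm _) (C.le_opNorm _))

theorem summable_norm_tridiag (hY : Summable fun k => ‖Y k‖) :
    Summable fun k => ‖tridiag A B C Y k‖ :=
  .of_nonneg_of_le (fun _ => norm_nonneg _) (norm_tridiag_apply_le A B C Y)
    ((((summable_norm_comp_add hY 1).mul_left _).add (hY.mul_left _)).add
      ((summable_norm_comp_sub hY 1).mul_left _))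

theorem tsum_norm_tridiag_le (hY : Summable fun k => ‖Y k‖) :
    ∑' k, ‖tridiag A B C Y k‖ ≤ (‖A‖ + ‖B‖ + ‖C‖) * ∑' k, ‖Y k‖ := by
  have h₁ := (summable_norm_comp_add hY 1).mul_left ‖A‖
  have h₀ := hY.mul_left ‖B‖
  have h₂ := (summable_norm_comp_sub hY 1).mul_left ‖C‖
  calc ∑' k, ‖tridiag A B C Y k‖
      ≤ ∑' k, (‖A‖ * ‖Y (k + 1)‖ + ‖B‖ * ‖Y k‖ + ‖C‖ * ‖Y (k - 1)‖) :=
        (summable_norm_tridiag A B C hY).tsum_le_tsum (norm_tridiag_apply_le A B C Y)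
          ((h₁.add h₀).add h₂)
    _ = (‖A‖ + ‖B‖ + ‖C‖) * ∑' k, ‖Y k‖ := by
        rw [(h₁.add h₀).tsum_add h₂, h₁.tsum_add h₀, tsum_mul_left, tsum_mul_left, tsum_mul_left,
          tsum_norm_comp_add, tsum_norm_comp_sub]
        ring

theorem exists_tsum_norm_tridiag_le :
    ∃ M : ℝ, 0 ≤ M ∧ ∀ Y : ℤ → E, (Summable fun k => ‖Y k‖) →
      ∑' k, ‖tridiag A B C Y k‖ ≤ M * ∑' k, ‖Y k‖ :=
  ⟨_, by positivity, fun _ => tsum_norm_tridiag_le A B C⟩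

end Tridiag

attribute [local instance] Matrix.normedSpace

section MatrixMaps

variable {n 𝕜 : Type*} [Fintype n] [NontriviallyNormedField 𝕜] [CompleteSpace 𝕜]

def adCLM (X : Matrix n n 𝕜) : Matrix n n 𝕜 →L[𝕜] Matrix n n 𝕜 :=
  LinearMap.toContinuousLinearMap (LinearMap.mulLeft 𝕜 X - LinearMap.mulRight 𝕜 X)

def traceMulCLM (X : Matrix n n 𝕜) : Matrix n n 𝕜 →L[𝕜] 𝕜 :=
  LinearMap.toContinuousLinearMap (Matrix.traceLinearMap n 𝕜 𝕜 ∘ₗ LinearMap.mulLeft 𝕜 X)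

end MatrixMaps

theorem memL.sub {Y Z : ℤ → Matrix (Fin 2) (Fin 2) ℂ} (hY : memL Y) (hZ : memL Z) :
    memL (Y - Z) :=
  ⟨.of_nonneg_of_le (fun _ => norm_nonneg _) (fun k => norm_sub_le (Y k) (Z k)) (hY.1.add hZ.1),
    fun k => by rw [Pi.sub_apply, Matrix.trace_sub, hY.2, hZ.2, sub_zero]⟩

theorem memL.smul (c : ℂ) {Y : ℤ → Matrix (Fin 2) (Fin 2) ℂ} (hY : memL Y) : memL (c • Y) :=
  ⟨summable_norm_smul c hY.1,
    fun k => by rw [Pi.smul_apply, Matrix.trace_smul, hY.2, smul_zero]⟩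

section Loop

variable (α : ℝ) (β : ℂ)

theorem brX_eq_tridiag :
    brX α β = tridiag (adCLM (XX α β (-1))) (adCLM (XX α β 0)) (adCLM (XX α β 1)) :=
  rfl

-- `tr(𝔛ξ)`
def traceX : (ℤ → Matrix (Fin 2) (Fin 2) ℂ) →ₗ[ℂ] (ℤ → ℂ) :=
  tridiag (traceMulCLM (XX α β (-1))) (traceMulCLM (XX α β 0)) (traceMulCLM (XX α β 1))

-- `f·𝔛`
def smulX : (ℤ → ℂ) →ₗ[ℂ] (ℤ → Matrix (Fin 2) (Fin 2) ℂ) :=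
  tridiag (.toSpanSingleton ℂ (XX α β (-1))) (.toSpanSingleton ℂ (XX α β 0))
    (.toSpanSingleton ℂ (XX α β 1))

theorem kcond_iff_traceX_eq_zero {Y : ℤ → Matrix (Fin 2) (Fin 2) ℂ} :
    Kcond α β Y ↔ traceX α β Y = 0 :=
  funext_iff.symm

theorem XX_neg_one : XX α β (-1) = !![0, β; 0, 0] := by
  simp [XX]

theorem XX_one : XX α β 1 = !![0, 0; conj β, 0] := by
  simp [XX]

theorem exists_XX_zero :
    ∃ μ : ℂ, μ ^ 2 = -(α ^ 2 + β * conj β) ∧ XX α β 0 = !![μ, 0; 0, -μ] := by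
  refine ⟨I * (√(α ^ 2 + normSq β) : ℝ), ?_, by simp [XX]⟩
  rw [mul_pow, I_sq, ← ofReal_pow, Real.sq_sqrt (add_nonneg (sq_nonneg α) (normSq_nonneg β)),
    mul_conj]
  push_cast
  ring

theorem traceX_apply (Y : ℤ → Matrix (Fin 2) (Fin 2) ℂ) (k : ℤ) :
    traceX α β Y k = (XX α β (-1) * Y (k + 1)).trace + (XX α β 0 * Y k).trace
      + (XX α β 1 * Y (k - 1)).trace :=
  rfl

theorem smulX_apply (f : ℤ → ℂ) (k : ℤ) :
    smulX α β f k = f (k + 1) • XX α β (-1) + f k • XX α β 0 + f (k - 1) • XX α β 1 :=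
  rfl

-- Checked entrywise; the only relation needed is `μ² + |β|² = -α²`, i.e. `det 𝔛(λ) = α²`.
theorem brX_brX {Y : ℤ → Matrix (Fin 2) (Fin 2) ℂ} (hY : ∀ k, (Y k).trace = 0) :
    brX α β (brX α β Y) = (-4 * α ^ 2 : ℂ) • Y - (2 : ℂ) • smulX α β (traceX α β Y) := by
  obtain ⟨μ, hμ, hX₀⟩ := exists_XX_zero α β
  have hη : ∀ k, Y k = !![Y k 0 0, Y k 0 1; Y k 1 0, -Y k 0 0] := fun k => by
    rw [neg_eq_of_add_eq_zero_right ((Y k).trace_fin_two.symm.trans (hY k))]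
    exact eta_fin_two _
  ext k : 1
  simp only [brX, smulX_apply, traceX_apply, Pi.sub_apply, Pi.smul_apply, XX_neg_one, XX_one,
    hX₀, show k + 1 + 1 = k + 2 by ring, show k + 1 - 1 = k by ring, show k - 1 + 1 = k by ring,
    show k - 1 - 1 = k - 2 by ring]
  rw [hη (k + 2), hη (k + 1), hη k, hη (k - 1), hη (k - 2)]
  ext i j
  fin_cases i <;> fin_cases j <;> simp [Matrix.trace_fin_two]
  · linear_combination (4 * Y k 0 0) * hμ
  · linear_combination (4 * Y k 0 1) * hμ
  · linear_combination (4 * Y k 1 0) * hμ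
  · linear_combination (-4 * Y k 0 0) * hμ

theorem brX_zero : brX α β 0 = 0 := by
  rw [brX_eq_tridiag, map_zero]

theorem trace_brX (Y : ℤ → Matrix (Fin 2) (Fin 2) ℂ) (k : ℤ) : (brX α β Y k).trace = 0 := by
  simp only [brX, Matrix.trace_add, Matrix.trace_sub, Matrix.trace_mul_comm (XX α β _), sub_self,
    add_zero]

theorem memL_brX {Y : ℤ → Matrix (Fin 2) (Fin 2) ℂ} (hY : memL Y) : memL (brX α β Y) :=
  ⟨by rw [brX_eq_tridiag]; exact summable_norm_tridiag _ _ _ hY.1, trace_brX α β Y⟩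

theorem exists_eq_smulX_of_brX_eq_zero (hα : α ≠ 0) {D : ℤ → Matrix (Fin 2) (Fin 2) ℂ}
    (hD : memL D) (h : brX α β D = 0) :
    ∃ f : ℤ → ℂ, (Summable fun k => ‖f k‖) ∧ D = smulX α β f := by
  have hc : (-4 * α ^ 2 : ℂ) ≠ 0 := by simp [hα]
  have key := brX_brX α β hD.2
  rw [h, brX_zero, eq_comm, sub_eq_zero] at key
  refine ⟨(-2 * α ^ 2 : ℂ)⁻¹ • traceX α β D,
    summable_norm_smul _ (summable_norm_tridiag _ _ _ hD.1), ?_⟩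
  calc D = (-4 * α ^ 2 : ℂ)⁻¹ • (-4 * α ^ 2 : ℂ) • D := (inv_smul_smul₀ hc D).symm
    _ = smulX α β ((-2 * α ^ 2 : ℂ)⁻¹ • traceX α β D) := by
      rw [key, map_smul, smul_smul]
      congr 1
      field_simp
      ring

def solX (Y : ℤ → Matrix (Fin 2) (Fin 2) ℂ) : ℤ → Matrix (Fin 2) (Fin 2) ℂ :=
  (-4 * α ^ 2 : ℂ)⁻¹ • brX α β Y

theorem brX_solX (hα : α ≠ 0) {Y : ℤ → Matrix (Fin 2) (Fin 2) ℂ} (hY : ∀ k, (Y k).trace = 0)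
    (hK : Kcond α β Y) : brX α β (solX α β Y) = Y := by
  have hc : (-4 * α ^ 2 : ℂ) ≠ 0 := by simp [hα]
  rw [kcond_iff_traceX_eq_zero] at hK
  rw [solX, brX_eq_tridiag, map_smul, ← brX_eq_tridiag, brX_brX α β hY, hK, map_zero, smul_zero,
    sub_zero, inv_smul_smul₀ hc]

theorem exists_tsum_norm_solX_le :
    ∃ C : ℝ, 0 < C ∧ ∀ Y, memL Y → ∑' k, ‖solX α β Y k‖ ≤ C * ∑' k, ‖Y k‖ := by
  set c : ℂ := (-4 * α ^ 2 : ℂ)⁻¹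
  obtain ⟨M, hM₀, hM⟩ := exists_tsum_norm_tridiag_le
    (adCLM (XX α β (-1))) (adCLM (XX α β 0)) (adCLM (XX α β 1))
  refine ⟨‖c‖ * M + 1, by positivity, fun Y hY => ?_⟩
  calc ∑' k, ‖solX α β Y k‖ = ‖c‖ * ∑' k, ‖brX α β Y k‖ := by
        simp only [solX, Pi.smul_apply, norm_smul, tsum_mul_left, c]
    _ ≤ ‖c‖ * (M * ∑' k, ‖Y k‖) := by
        rw [brX_eq_tridiag]
        gcongr
        exact hM Y hY.1
    _ ≤ (‖c‖ * M + 1) * ∑' k, ‖Y k‖ := by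
        rw [← mul_assoc, add_mul, one_mul]
        exact le_add_of_nonneg_right (tsum_nonneg fun k => norm_nonneg (Y k))

end Loop

/-- For every `Y ∈ K_𝔛` there exists `Ŷ ∈ Λ` with `[𝔛, Ŷ] = Y`; `Ŷ` is unique up to
adding `f·𝔛` for a summable scalar sequence `f` (acting by convolution), and the
assignment `Y ↦ Ŷ` can be chosen to be a continuous linear map. -/
theorem stmt13 (α : ℝ) (hα : 0 < α) (β : ℂ) :
    -- existence
    (∀ Y, memL Y → Kcond α β Y → ∃ Yhat, memL Yhat ∧ brX α β Yhat = Y) ∧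
    -- uniqueness up to f·𝔛
    (∀ Y Yhat Yhat', memL Y → Kcond α β Y →
      memL Yhat → memL Yhat' → brX α β Yhat = Y → brX α β Yhat' = Y →
      ∃ f : ℤ → ℂ, Summable (fun k => ‖f k‖) ∧
        ∀ k : ℤ, Yhat' k - Yhat k
          = f (k + 1) • XX α β (-1) + f k • XX α β 0 + f (k - 1) • XX α β 1) ∧
    -- a continuous linear choice of solution operator
    (∃ sol : (ℤ → Matrix (Fin 2) (Fin 2) ℂ) → (ℤ → Matrix (Fin 2) (Fin 2) ℂ),
      (∀ Y, memL Y → Kcond α β Y → memL (sol Y) ∧ brX α β (sol Y) = Y) ∧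
      (∀ Y Z, memL Y → Kcond α β Y → memL Z → Kcond α β Z → sol (Y + Z) = sol Y + sol Z) ∧
      (∀ (c : ℂ) (Y), memL Y → Kcond α β Y → sol (fun k => c • Y k) = fun k => c • sol Y k) ∧
      ∃ C : ℝ, 0 < C ∧ ∀ Y, memL Y → Kcond α β Y →
        (∑' k, ‖sol Y k‖) ≤ C * ∑' k, ‖Y k‖) := by
  have hα₀ : α ≠ 0 := hα.ne'
  have solves : ∀ Y, memL Y → Kcond α β Y → memL (solX α β Y) ∧ brX α β (solX α β Y) = Y :=
    fun Y hY hK => ⟨(memL_brX α β hY).smul _, brX_solX α β hα₀ hY.2 hK⟩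
  obtain ⟨C, hC, hbound⟩ := exists_tsum_norm_solX_le α β
  refine ⟨fun Y hY hK => ⟨_, solves Y hY hK⟩, ?_,
    ⟨solX α β, solves, ?_, ?_, C, hC, fun Y hY _ => hbound Y hY⟩⟩
  · intro Y Ŷ Ŷ' _ _ hŶ hŶ' h h'
    have hD := hŶ'.sub hŶ
    have hbrD : brX α β (Ŷ' - Ŷ) = 0 := by
      rw [brX_eq_tridiag, map_sub, ← brX_eq_tridiag, h, h', sub_self]
    obtain ⟨f, hf, hDf⟩ := exists_eq_smulX_of_brX_eq_zero α β hα₀ hD hbrD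
    exact ⟨f, hf, fun k => by rw [← smulX_apply, ← hDf, Pi.sub_apply]⟩
  · intro Y Z _ _ _ _
    simp only [solX, brX_eq_tridiag, map_add, smul_add]
  · intro c Y _ _
    change solX α β (c • Y) = c • solX α β Y
    simp only [solX, brX_eq_tridiag, map_smul, smul_comm c]
end
end
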